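/- Let $H$ be a quasi-Hopf algebra with bijective antipode $S$, Drinfeld twist $F_\delta$, and let $\Delta_0(a) = (S^{-1}\otimes S^{-1})\Delta^T(S(a))$. Then the element $F_0 = (S^{-1}\otimes S^{-1})F_\delta^T$ is a twist on $H$ satisfying $F_0\Delta(a)F_0^{-1} = \Delta_0(a)$ for all $a\in H$, and $\Phi_0 := (S^{-1}\otimes S^{-1}\otimes S^{-1})\Phi_{321} = (F_0\otimes 1)(\Delta\otimes 1)F_0\cdot\Phi\cdot(1\otimes\Delta)F_0^{-1}(1\otimes F_0^{-1})$. -/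
import Mathlib


open TensorProduct

noncomputable section

namespace QHA

variable (K : Type*) [Field K] (H : Type*) [Ring H] [Algebra K H]

abbrev T2 := H ⊗[K] H
abbrev T3 := H ⊗[K] (H ⊗[K] H)
abbrev T4 := H ⊗[K] (H ⊗[K] (H ⊗[K] H))

/-- multiplication `x ⊗ y ↦ x * y`. -/
def mul2 : T2 K H →ₗ[K] H := LinearMap.mul' K H

/-- `Δ ⊗ 1`, re-associated to land in `H ⊗ (H ⊗ H)`. -/
def DL (Δl : H →ₗ[K] T2 K H) : T2 K H →ₗ[K] T3 K H :=
  (TensorProduct.assoc K H H H).toLinearMap ∘ₗ TensorProduct.map Δl LinearMap.id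

/-- `1 ⊗ Δ`. -/
def DR (Δl : H →ₗ[K] T2 K H) : T2 K H →ₗ[K] T3 K H :=
  TensorProduct.map LinearMap.id Δl

/-- embed `x ⊗ y ↦ x ⊗ y ⊗ 1`. -/
def j12 : T2 K H →ₗ[K] T3 K H :=
  TensorProduct.map LinearMap.id ((TensorProduct.mk K H H).flip 1)

/-- embed `x ⊗ y ↦ 1 ⊗ x ⊗ y`. -/
def j23 : T2 K H →ₗ[K] T3 K H := TensorProduct.mk K H (H ⊗[K] H) 1

/-- embed `x ⊗ y ↦ x ⊗ 1 ⊗ y`. -/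
def j13two : T2 K H →ₗ[K] T3 K H :=
  TensorProduct.map LinearMap.id (TensorProduct.mk K H H 1)

/-- `Δ ⊗ 1 ⊗ 1` on three legs. -/
def d12 (Δl : H →ₗ[K] T2 K H) : T3 K H →ₗ[K] T4 K H :=
  (TensorProduct.assoc K H H (H ⊗[K] H)).toLinearMap ∘ₗ TensorProduct.map Δl LinearMap.id

/-- `1 ⊗ Δ ⊗ 1` on three legs. -/
def d23 (Δl : H →ₗ[K] T2 K H) : T3 K H →ₗ[K] T4 K H :=
  TensorProduct.map LinearMap.id (DL K H Δl)

/-- `1 ⊗ 1 ⊗ Δ` on three legs. -/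
def d34 (Δl : H →ₗ[K] T2 K H) : T3 K H →ₗ[K] T4 K H :=
  TensorProduct.map LinearMap.id (TensorProduct.map LinearMap.id Δl)

/-- embed `x ⊗ y ⊗ z ↦ x ⊗ y ⊗ z ⊗ 1`. -/
def j123 : T3 K H →ₗ[K] T4 K H :=
  TensorProduct.map LinearMap.id (TensorProduct.map LinearMap.id ((TensorProduct.mk K H H).flip 1))

/-- embed `x ↦ 1 ⊗ x`. -/
def j234 : T3 K H →ₗ[K] T4 K H := TensorProduct.mk K H (T3 K H) 1

/-- `ε ⊗ 1` on two legs. -/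
def eL (εl : H →ₗ[K] K) : T2 K H →ₗ[K] H :=
  (TensorProduct.lid K H).toLinearMap ∘ₗ TensorProduct.map εl LinearMap.id

/-- `1 ⊗ ε` on two legs. -/
def eR (εl : H →ₗ[K] K) : T2 K H →ₗ[K] H :=
  (TensorProduct.rid K H).toLinearMap ∘ₗ TensorProduct.map LinearMap.id εl

/-- `ε ⊗ 1 ⊗ 1`. -/
def e1 (εl : H →ₗ[K] K) : T3 K H →ₗ[K] T2 K H :=
  (TensorProduct.lid K (T2 K H)).toLinearMap ∘ₗ TensorProduct.map εl LinearMap.id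

/-- `1 ⊗ ε ⊗ 1`. -/
def e2 (εl : H →ₗ[K] K) : T3 K H →ₗ[K] T2 K H :=
  TensorProduct.map LinearMap.id (eL K H εl)

/-- `1 ⊗ 1 ⊗ ε`. -/
def e3 (εl : H →ₗ[K] K) : T3 K H →ₗ[K] T2 K H :=
  TensorProduct.map LinearMap.id (eR K H εl)

/-- the permutation `x ⊗ y ⊗ z ↦ x ⊗ z ⊗ y`. -/
def p132 : T3 K H ≃ₗ[K] T3 K H :=
  TensorProduct.congr (LinearEquiv.refl K H) (TensorProduct.comm K H H)

/-- the permutation `x ⊗ y ⊗ z ↦ y ⊗ x ⊗ z`. -/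
def p213 : T3 K H ≃ₗ[K] T3 K H := TensorProduct.leftComm K H H H

/-- `Φ ↦ Φ_{231}`, i.e. `x ⊗ y ⊗ z ↦ z ⊗ x ⊗ y`. -/
def p231 : T3 K H ≃ₗ[K] T3 K H := (p132 K H).trans (p213 K H)

/-- `Φ ↦ Φ_{312}`, i.e. `x ⊗ y ⊗ z ↦ y ⊗ z ⊗ x`. -/
def p312 : T3 K H ≃ₗ[K] T3 K H := (p213 K H).trans (p132 K H)

/-- total reversal `x ⊗ y ⊗ z ↦ z ⊗ y ⊗ x`. -/
def p321 : T3 K H ≃ₗ[K] T3 K H :=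
  (p132 K H).trans ((TensorProduct.comm K H (H ⊗[K] H)).trans (TensorProduct.assoc K H H H))

/-- A quasi-bialgebra structure on `H`. -/
structure QuasiBialgebra : Type _ where
  Δ : H →ₐ[K] T2 K H
  ε : H →ₐ[K] K
  Φ : (T3 K H)ˣ
  quasiCoassoc : ∀ a : H,
    (Φ : T3 K H) * DR K H Δ.toLinearMap (Δ a) =
      DL K H Δ.toLinearMap (Δ a) * (Φ : T3 K H)
  pentagon :
    d12 K H Δ.toLinearMap (Φ : T3 K H) * d34 K H Δ.toLinearMap (Φ : T3 K H) =
      j123 K H (Φ : T3 K H) * d23 K H Δ.toLinearMap (Φ : T3 K H) * j234 K H (Φ : T3 K H)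
  counit_left : ∀ a : H, eL K H ε.toLinearMap (Δ a) = a
  counit_right : ∀ a : H, eR K H ε.toLinearMap (Δ a) = a
  eps_mid : e2 K H ε.toLinearMap (Φ : T3 K H) = 1

/-- `x ⊗ (y ⊗ z) ↦ S'(x) * α' * y * β * S(z)` (the mixed `v`-expression). -/
def mixPhi (S' S : H →ₗ[K] H) (α' β : H) : T3 K H →ₗ[K] H :=
  mul2 K H ∘ₗ TensorProduct.map S'
    (mul2 K H ∘ₗ TensorProduct.map (LinearMap.mulLeft K α') (LinearMap.mulLeft K β ∘ₗ S))

/-- `x ⊗ (y ⊗ z) ↦ x * β * S(y) * α * z`. -/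
def antPhiInvMap (S : H →ₗ[K] H) (α β : H) : T3 K H →ₗ[K] H :=
  mul2 K H ∘ₗ TensorProduct.map LinearMap.id
    (mul2 K H ∘ₗ TensorProduct.map (LinearMap.mulLeft K β ∘ₗ S) (LinearMap.mulLeft K α))

/-- `(S, α, β)` is a quasi-antipode for the quasi-bialgebra `qb`. -/
structure IsQuasiAntipode (qb : QuasiBialgebra K H) (S : H →ₗ[K] H) (α β : H) : Prop where
  map_one : S 1 = 1
  anti_mul : ∀ a b : H, S (a * b) = S b * S a
  phi : mixPhi K H S S α β (qb.Φ : T3 K H) = 1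
  phi_inv : antPhiInvMap K H S α β ((qb.Φ⁻¹ : (T3 K H)ˣ) : T3 K H) = 1
  antialpha : ∀ a : H,
    mul2 K H (TensorProduct.map S LinearMap.id (qb.Δ a) * (α ⊗ₜ[K] (1 : H))) = qb.ε a • α
  antibeta : ∀ a : H,
    mul2 K H (TensorProduct.map LinearMap.id S (qb.Δ a) * (β ⊗ₜ[K] (1 : H))) = qb.ε a • β

/-- `F` is a twist for `qb`: counit property (invertibility is part of being a unit). -/
structure IsTwist (qb : QuasiBialgebra K H) (F : (T2 K H)ˣ) : Prop where
  eps_left : eL K H qb.ε.toLinearMap (F : T2 K H) = 1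
  eps_right : eR K H qb.ε.toLinearMap (F : T2 K H) = 1

/-- the twisted coassociator `Φ_F`. -/
def twistPhiE (Δl : H →ₗ[K] T2 K H) (Φel : T3 K H) (F : (T2 K H)ˣ) : T3 K H :=
  j12 K H (F : T2 K H) * DL K H Δl (F : T2 K H) * Φel *
    DR K H Δl ((F⁻¹ : (T2 K H)ˣ) : T2 K H) * j23 K H ((F⁻¹ : (T2 K H)ˣ) : T2 K H)

/-- the inverse of the twisted coassociator `Φ_F⁻¹`. -/
def twistPhiInvE (Δl : H →ₗ[K] T2 K H) (Φinvel : T3 K H) (F : (T2 K H)ˣ) : T3 K H :=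
  j23 K H (F : T2 K H) * DR K H Δl (F : T2 K H) * Φinvel *
    DL K H Δl ((F⁻¹ : (T2 K H)ˣ) : T2 K H) * j12 K H ((F⁻¹ : (T2 K H)ˣ) : T2 K H)

/-- `α_F = Σ S(f̄ᵢ) α f̄ⁱ`. -/
def twistAlpha (S : H →ₗ[K] H) (α : H) (F : (T2 K H)ˣ) : H :=
  mul2 K H (TensorProduct.map S LinearMap.id ((F⁻¹ : (T2 K H)ˣ) : T2 K H) * (α ⊗ₜ[K] (1 : H)))

/-- `β_F = Σ fᵢ β S(fⁱ)`. -/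
def twistBeta (S : H →ₗ[K] H) (β : H) (F : (T2 K H)ˣ) : H :=
  mul2 K H (TensorProduct.map LinearMap.id S (F : T2 K H) * (β ⊗ₜ[K] (1 : H)))

/-- the twisted coproduct `Δ_F(a) = F Δ(a) F⁻¹`, as a linear map. -/
def twistDelta (Δl : H →ₗ[K] T2 K H) (F : (T2 K H)ˣ) : H →ₗ[K] T2 K H :=
  LinearMap.mulLeft K (F : T2 K H) ∘ₗ
    LinearMap.mulRight K ((F⁻¹ : (T2 K H)ˣ) : T2 K H) ∘ₗ Δl

/-- `x ⊗ y ↦ x * α * y`. -/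
def mulMid (α : H) : T2 K H →ₗ[K] H :=
  mul2 K H ∘ₗ TensorProduct.map (LinearMap.mulRight K α) LinearMap.id

/-- `a ⊗ b ⊗ c ⊗ d ↦ (S(b) α c) ⊗ (S(a) α d)`, the `γ` pairing. -/
def gammaMap (S : H →ₗ[K] H) (α : H) : T4 K H →ₗ[K] T2 K H :=
  TensorProduct.map (mulMid K H α) (mulMid K H α) ∘ₗ
    (TensorProduct.assoc K H H (T2 K H)).symm.toLinearMap ∘ₗ
    TensorProduct.map LinearMap.id (TensorProduct.leftComm K H H H).toLinearMap ∘ₗ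
    (TensorProduct.leftComm K H H (T2 K H)).toLinearMap ∘ₗ
    TensorProduct.map S (TensorProduct.map S (LinearMap.id : T2 K H →ₗ[K] T2 K H))

/-- the Drinfeld element `γ = Σ S(Bᵢ) α Cᵢ ⊗ S(Aᵢ) α Dᵢ`
with `Σ Aᵢ⊗Bᵢ⊗Cᵢ⊗Dᵢ = (Φ⁻¹ ⊗ 1)·(Δ⊗1⊗1)Φ`. -/
def gammaEl (Δl : H →ₗ[K] T2 K H) (Φel Φinvel : T3 K H) (S : H →ₗ[K] H) (α : H) : T2 K H :=
  gammaMap K H S α (j123 K H Φinvel * d12 K H Δl Φel)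

/-- `y ⊗ z ↦ y * β * S(z)`. -/
def gBeta (S : H →ₗ[K] H) (β : H) : T2 K H →ₗ[K] H :=
  mul2 K H ∘ₗ TensorProduct.map LinearMap.id (LinearMap.mulLeft K β ∘ₗ S)

/-- the canonical Drinfeld twist expression
`F_δ = Σ (S⊗S)Δᵀ(X_ν) · γ · Δ(Y_ν β S(Z_ν))`. -/
def drinfeldExpr (Δl : H →ₗ[K] T2 K H) (Φel Φinvel : T3 K H) (S : H →ₗ[K] H) (α β : H) :
    T2 K H :=
  LinearMap.mul' K (T2 K H)
    (TensorProduct.map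
      (TensorProduct.map S S ∘ₗ (TensorProduct.comm K H H).toLinearMap ∘ₗ Δl)
      (LinearMap.mulLeft K (gammaEl K H Δl Φel Φinvel S α) ∘ₗ Δl ∘ₗ gBeta K H S β)
      Φel)

/-- `a ⊗ b ⊗ c ⊗ d ↦ (a β S(d)) ⊗ (b β S(c))`, the `γ̄` pairing. -/
def gammaBarMap (S : H →ₗ[K] H) (β : H) : T4 K H →ₗ[K] T2 K H :=
  TensorProduct.map (mulMid K H β) (mulMid K H β) ∘ₗ
    (TensorProduct.assoc K H H (T2 K H)).symm.toLinearMap ∘ₗ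
    TensorProduct.map LinearMap.id (TensorProduct.leftComm K H H H).toLinearMap ∘ₗ
    TensorProduct.map LinearMap.id
      (TensorProduct.map LinearMap.id (TensorProduct.comm K H H).toLinearMap) ∘ₗ
    TensorProduct.map LinearMap.id
      (TensorProduct.map LinearMap.id (TensorProduct.map S S))

/-- the element `γ̄ = Σ Āᵢ β S(D̄ᵢ) ⊗ B̄ᵢ β S(C̄ᵢ)`
with `Σ Āᵢ⊗B̄ᵢ⊗C̄ᵢ⊗D̄ᵢ = (Δ⊗1⊗1)Φ⁻¹·(Φ⊗1)`. -/
def gammaBarEl (Δl : H →ₗ[K] T2 K H) (Φel Φinvel : T3 K H) (S : H →ₗ[K] H) (β : H) :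
    T2 K H :=
  gammaBarMap K H S β (d12 K H Δl Φinvel * j123 K H Φel)

/-- the canonical inverse Drinfeld twist expression
`F_δ⁻¹ = Σ Δ(S(X_ν) α Y_ν) · γ̄ · (S⊗S)Δᵀ(Z_ν)`. -/
def drinfeldInvExpr (Δl : H →ₗ[K] T2 K H) (Φel Φinvel : T3 K H) (S : H →ₗ[K] H) (α β : H) :
    T2 K H :=
  LinearMap.mul' K (T2 K H)
    (TensorProduct.map
      (LinearMap.mulRight K (gammaBarEl K H Δl Φel Φinvel S β) ∘ₗ Δl ∘ₗ
        (mul2 K H ∘ₗ TensorProduct.map (LinearMap.mulRight K α ∘ₗ S) LinearMap.id))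
      (TensorProduct.map S S ∘ₗ (TensorProduct.comm K H H).toLinearMap ∘ₗ Δl)
      ((TensorProduct.assoc K H H H).symm.toLinearMap Φel))

/-- the unit `Fᵀ` obtained by flipping a unit of `H ⊗ H`. -/
def unitComm (u : (T2 K H)ˣ) : (T2 K H)ˣ where
  val := Algebra.TensorProduct.comm K H H (u : T2 K H)
  inv := Algebra.TensorProduct.comm K H H ((u⁻¹ : (T2 K H)ˣ) : T2 K H)
  val_inv := by rw [← map_mul, Units.mul_inv, map_one]
  inv_val := by rw [← map_mul, Units.inv_mul, map_one]

/-- `R` is a quasi-triangular `R`-matrix for `qb`. -/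
structure IsRMatrix (qb : QuasiBialgebra K H) (R : (T2 K H)ˣ) : Prop where
  intertwine : ∀ a : H,
    (TensorProduct.comm K H H) (qb.Δ a) * (R : T2 K H) = (R : T2 K H) * qb.Δ a
  hexagon1 :
    DL K H qb.Δ.toLinearMap (R : T2 K H) =
      p231 K H ((qb.Φ⁻¹ : (T3 K H)ˣ) : T3 K H) * j13two K H (R : T2 K H) *
        p132 K H (qb.Φ : T3 K H) * j23 K H (R : T2 K H) *
        ((qb.Φ⁻¹ : (T3 K H)ˣ) : T3 K H)
  hexagon2 :
    DR K H qb.Δ.toLinearMap (R : T2 K H) =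
      p312 K H (qb.Φ : T3 K H) * j13two K H (R : T2 K H) *
        p213 K H ((qb.Φ⁻¹ : (T3 K H)ˣ) : T3 K H) * j12 K H (R : T2 K H) *
        (qb.Φ : T3 K H)

/-- the defining property of the (Drinfeld–Reshetikhin type) `u`-operator
associated with an `R`-matrix `Q`. -/
def uProp (S Sinv : H →ₗ[K] H) (α β : H) (Q : (T2 K H)ˣ) (u : Hˣ) : Prop :=
  (∀ a : H, S (S a) = (u : H) * a * ((u⁻¹ : Hˣ) : H)) ∧
  ((u : H) * Sinv α = twistAlpha K H S α Q) ∧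
  (twistBeta K H S β Q * (u : H) = Sinv β)

/-- the explicit formula `u = Σ S(Y_ν β S(Z_ν)) αQ X_ν`. -/
def uExpr (Φel : T3 K H) (S : H →ₗ[K] H) (αQ β : H) : H :=
  mul2 K H (TensorProduct.map (LinearMap.mulRight K αQ ∘ₗ S ∘ₗ gBeta K H S β)
    LinearMap.id ((TensorProduct.comm K H (H ⊗[K] H)) Φel))

end QHA

namespace QHA

set_option synthInstance.maxHeartbeats 1000000
set_option maxHeartbeats 2000000

section Aux

variable (K : Type*) [Field K] (H : Type*) [Ring H] [Algebra K H]

/-- `(f ⊗ f) ∘ τ` on two legs. -/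
def tau2 (f : H →ₗ[K] H) : T2 K H →ₗ[K] T2 K H :=
  TensorProduct.map f f ∘ₗ (TensorProduct.comm K H H).toLinearMap

/-- `(f ⊗ f ⊗ f) ∘ p321` on three legs. -/
def tau3 (f : H →ₗ[K] H) : T3 K H →ₗ[K] T3 K H :=
  TensorProduct.map f (TensorProduct.map f f) ∘ₗ (p321 K H).toLinearMap

@[simp] lemma tau2_tmul (f : H →ₗ[K] H) (a b : H) :
    tau2 K H f (a ⊗ₜ[K] b) = f b ⊗ₜ[K] f a := rfl

@[simp] lemma p321_tmul (a b c : H) :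
    p321 K H (a ⊗ₜ[K] (b ⊗ₜ[K] c)) = c ⊗ₜ[K] (b ⊗ₜ[K] a) := by
  simp [p321, p132]

@[simp] lemma tau3_tmul (f : H →ₗ[K] H) (a b c : H) :
    tau3 K H f (a ⊗ₜ[K] (b ⊗ₜ[K] c)) = f c ⊗ₜ[K] (f b ⊗ₜ[K] f a) := by
  simp [tau3]

lemma tau2_one (f : H →ₗ[K] H) (hf1 : f 1 = 1) : tau2 K H f 1 = 1 := by
  simp [Algebra.TensorProduct.one_def, hf1]

lemma tau2_mul (f : H →ₗ[K] H) (hf : ∀ a b : H, f (a * b) = f b * f a) (x y : T2 K H) :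
    tau2 K H f (x * y) = tau2 K H f y * tau2 K H f x := by
  induction x using TensorProduct.induction_on with
  | zero => simp
  | tmul a b =>
    induction y using TensorProduct.induction_on with
    | zero => simp
    | tmul c d => simp [Algebra.TensorProduct.tmul_mul_tmul, hf]
    | add u v hu hv => simp only [mul_add, add_mul, map_add, hu, hv]
  | add u v hu hv => simp only [mul_add, add_mul, map_add, hu, hv]

lemma tau2_tau2 (f g : H →ₗ[K] H) (hgf : ∀ a : H, g (f a) = a) (x : T2 K H) :
    tau2 K H g (tau2 K H f x) = x := by
  induction x using TensorProduct.induction_on with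
  | zero => simp
  | tmul a b => simp [hgf]
  | add u v hu hv => simp only [map_add, hu, hv]

lemma asso_mul (u v : T2 K H) (c d : H) :
    (TensorProduct.assoc K H H H) (u ⊗ₜ[K] c) * (TensorProduct.assoc K H H H) (v ⊗ₜ[K] d) =
      (TensorProduct.assoc K H H H) ((u * v) ⊗ₜ[K] (c * d)) := by
  induction u using TensorProduct.induction_on with
  | zero => simp only [TensorProduct.zero_tmul, LinearEquiv.map_zero, zero_mul]
  | tmul a b =>
    induction v using TensorProduct.induction_on with
    | zero => simp only [TensorProduct.zero_tmul, LinearEquiv.map_zero, zero_mul, mul_zero]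
    | tmul e g => simp [Algebra.TensorProduct.tmul_mul_tmul]
    | add u v hu hv => simp only [mul_add, add_mul, map_add, TensorProduct.add_tmul, hu, hv]
  | add u v hu hv => simp only [mul_add, add_mul, map_add, TensorProduct.add_tmul, hu, hv]

lemma tau3_tmul_right (f : H →ₗ[K] H) (a : H) (m : T2 K H) :
    tau3 K H f (a ⊗ₜ[K] m) = (TensorProduct.assoc K H H H) (tau2 K H f m ⊗ₜ[K] f a) := by
  induction m using TensorProduct.induction_on with
  | zero =>
    simp only [TensorProduct.tmul_zero, map_zero, TensorProduct.zero_tmul, LinearEquiv.map_zero]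
  | tmul b c => simp
  | add u v hu hv => simp only [TensorProduct.tmul_add, TensorProduct.add_tmul, map_add, hu, hv]

lemma tau3_assoc (f : H →ₗ[K] H) (m : T2 K H) (c : H) :
    tau3 K H f ((TensorProduct.assoc K H H H) (m ⊗ₜ[K] c)) = f c ⊗ₜ[K] tau2 K H f m := by
  induction m using TensorProduct.induction_on with
  | zero =>
    simp only [TensorProduct.zero_tmul, LinearEquiv.map_zero, map_zero, TensorProduct.tmul_zero]
  | tmul a b => simp
  | add u v hu hv => simp only [TensorProduct.tmul_add, TensorProduct.add_tmul, map_add, hu, hv]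

lemma tau3_mul (f : H →ₗ[K] H) (hf : ∀ a b : H, f (a * b) = f b * f a) (x y : T3 K H) :
    tau3 K H f (x * y) = tau3 K H f y * tau3 K H f x := by
  induction x using TensorProduct.induction_on with
  | zero => simp
  | tmul a m =>
    induction y using TensorProduct.induction_on with
    | zero => simp
    | tmul c n =>
      rw [Algebra.TensorProduct.tmul_mul_tmul, tau3_tmul_right, tau3_tmul_right,
        tau3_tmul_right, asso_mul, tau2_mul K H f hf, hf]
    | add u v hu hv => simp only [mul_add, add_mul, map_add, hu, hv]
  | add u v hu hv => simp only [mul_add, add_mul, map_add, hu, hv]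

lemma tau3_tau3 (f g : H →ₗ[K] H) (hgf : ∀ a : H, g (f a) = a) (x : T3 K H) :
    tau3 K H g (tau3 K H f x) = x := by
  induction x using TensorProduct.induction_on with
  | zero => simp
  | tmul a m => rw [tau3_tmul_right, tau3_assoc, hgf, tau2_tau2 K H f g hgf]
  | add u v hu hv => simp only [map_add, hu, hv]

@[simp] lemma j23_apply (x : T2 K H) : j23 K H x = (1 : H) ⊗ₜ[K] x := rfl

lemma j12_eq (x : T2 K H) : j12 K H x = (TensorProduct.assoc K H H H) (x ⊗ₜ[K] 1) := by
  induction x using TensorProduct.induction_on with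
  | zero => simp only [map_zero, TensorProduct.zero_tmul, LinearEquiv.map_zero]
  | tmul a b => simp [j12]
  | add u v hu hv => simp only [map_add, TensorProduct.add_tmul, hu, hv]

lemma j12_mul (x y : T2 K H) : j12 K H (x * y) = j12 K H x * j12 K H y := by
  rw [j12_eq, j12_eq, j12_eq, asso_mul, one_mul]

lemma j23_mul (x y : T2 K H) : j23 K H (x * y) = j23 K H x * j23 K H y := by
  simp only [j23_apply]
  rw [Algebra.TensorProduct.tmul_mul_tmul, one_mul]

lemma j12_one : j12 K H 1 = 1 := by
  rw [j12_eq]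
  simp [Algebra.TensorProduct.one_def]

lemma j23_one : j23 K H 1 = 1 := by
  rw [j23_apply]
  exact (Algebra.TensorProduct.one_def).symm

@[simp] lemma DL_tmul (Δl : H →ₗ[K] T2 K H) (a b : H) :
    DL K H Δl (a ⊗ₜ[K] b) = (TensorProduct.assoc K H H H) (Δl a ⊗ₜ[K] b) := rfl

@[simp] lemma DR_tmul (Δl : H →ₗ[K] T2 K H) (a b : H) :
    DR K H Δl (a ⊗ₜ[K] b) = a ⊗ₜ[K] Δl b := rfl

lemma DL_mul (Δa : H →ₐ[K] T2 K H) (x y : T2 K H) :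
    DL K H Δa.toLinearMap (x * y) = DL K H Δa.toLinearMap x * DL K H Δa.toLinearMap y := by
  induction x using TensorProduct.induction_on with
  | zero => simp
  | tmul a b =>
    induction y using TensorProduct.induction_on with
    | zero => simp
    | tmul c d =>
      simp only [Algebra.TensorProduct.tmul_mul_tmul, DL_tmul, AlgHom.toLinearMap_apply,
        map_mul, asso_mul]
    | add u v hu hv => simp only [mul_add, add_mul, map_add, hu, hv]
  | add u v hu hv => simp only [mul_add, add_mul, map_add, hu, hv]

lemma DR_mul (Δa : H →ₐ[K] T2 K H) (x y : T2 K H) :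
    DR K H Δa.toLinearMap (x * y) = DR K H Δa.toLinearMap x * DR K H Δa.toLinearMap y := by
  induction x using TensorProduct.induction_on with
  | zero => simp
  | tmul a b =>
    induction y using TensorProduct.induction_on with
    | zero => simp
    | tmul c d =>
      simp only [Algebra.TensorProduct.tmul_mul_tmul, DR_tmul, AlgHom.toLinearMap_apply,
        map_mul]
    | add u v hu hv => simp only [mul_add, add_mul, map_add, hu, hv]
  | add u v hu hv => simp only [mul_add, add_mul, map_add, hu, hv]

lemma DL_one (Δa : H →ₐ[K] T2 K H) : DL K H Δa.toLinearMap 1 = 1 := by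
  have : (1 : T2 K H) = (1 : H) ⊗ₜ[K] (1 : H) := Algebra.TensorProduct.one_def
  rw [this, DL_tmul, AlgHom.toLinearMap_apply, map_one]
  rw [Algebra.TensorProduct.one_def]
  simp [Algebra.TensorProduct.one_def]

lemma DR_one (Δa : H →ₐ[K] T2 K H) : DR K H Δa.toLinearMap 1 = 1 := by
  have : (1 : T2 K H) = (1 : H) ⊗ₜ[K] (1 : H) := Algebra.TensorProduct.one_def
  rw [this, DR_tmul, AlgHom.toLinearMap_apply, map_one]
  exact (Algebra.TensorProduct.one_def).symm

lemma j12_conj (u v t : T2 K H) (c : H) :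
    j12 K H u * (TensorProduct.assoc K H H H) (t ⊗ₜ[K] c) * j12 K H v =
      (TensorProduct.assoc K H H H) ((u * t * v) ⊗ₜ[K] c) := by
  rw [j12_eq, j12_eq, asso_mul, asso_mul, one_mul, mul_one]

lemma j23_conj (u v : T2 K H) (c : H) (t : T2 K H) :
    j23 K H u * (c ⊗ₜ[K] t) * j23 K H v = c ⊗ₜ[K] (u * t * v) := by
  simp only [j23_apply, Algebra.TensorProduct.tmul_mul_tmul, one_mul, mul_one]

lemma tau3_j12 (f : H →ₗ[K] H) (hf1 : f 1 = 1) (x : T2 K H) :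
    tau3 K H f (j12 K H x) = j23 K H (tau2 K H f x) := by
  induction x using TensorProduct.induction_on with
  | zero => simp
  | tmul a b => simp [j12, hf1]
  | add u v hu hv => simp only [map_add, hu, hv]

lemma tau3_j23 (f : H →ₗ[K] H) (hf1 : f 1 = 1) (x : T2 K H) :
    tau3 K H f (j23 K H x) = j12 K H (tau2 K H f x) := by
  rw [j23_apply, tau3_tmul_right, hf1, j12_eq]

lemma DR_conj (Δa : H →ₐ[K] T2 K H) (Sinv : H →ₗ[K] H) (u v : T2 K H)
    (hc : ∀ b : H, tau2 K H Sinv (Δa b) = u * Δa (Sinv b) * v) (x : T2 K H) :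
    tau3 K H Sinv (DR K H Δa.toLinearMap x) =
      j12 K H u * DL K H Δa.toLinearMap (tau2 K H Sinv x) * j12 K H v := by
  induction x using TensorProduct.induction_on with
  | zero => simp
  | tmul a b =>
    rw [DR_tmul, tau3_tmul_right, AlgHom.toLinearMap_apply, hc, tau2_tmul, DL_tmul,
      AlgHom.toLinearMap_apply, j12_conj]
  | add u' v' hu hv => simp only [map_add, mul_add, add_mul, hu, hv]

lemma DL_conj (Δa : H →ₐ[K] T2 K H) (Sinv : H →ₗ[K] H) (u v : T2 K H)
    (hc : ∀ b : H, tau2 K H Sinv (Δa b) = u * Δa (Sinv b) * v) (x : T2 K H) :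
    tau3 K H Sinv (DL K H Δa.toLinearMap x) =
      j23 K H u * DR K H Δa.toLinearMap (tau2 K H Sinv x) * j23 K H v := by
  induction x using TensorProduct.induction_on with
  | zero => simp
  | tmul a b =>
    rw [DL_tmul, tau3_assoc, AlgHom.toLinearMap_apply, hc, tau2_tmul, DR_tmul,
      AlgHom.toLinearMap_apply, j23_conj]
  | add u' v' hu hv => simp only [map_add, mul_add, add_mul, hu, hv]

@[simp] lemma eL_tmul (εl : H →ₗ[K] K) (a b : H) :
    eL K H εl (a ⊗ₜ[K] b) = εl a • b := by simp [eL]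

@[simp] lemma eR_tmul (εl : H →ₗ[K] K) (a b : H) :
    eR K H εl (a ⊗ₜ[K] b) = εl b • a := by simp [eR]

lemma eL_tau2 (εl : H →ₗ[K] K) (f : H →ₗ[K] H) (hεf : ∀ a : H, εl (f a) = εl a)
    (x : T2 K H) : eL K H εl (tau2 K H f x) = f (eR K H εl x) := by
  induction x using TensorProduct.induction_on with
  | zero => simp
  | tmul a b => simp [hεf]
  | add u v hu hv => simp only [map_add, hu, hv]

lemma eR_tau2 (εl : H →ₗ[K] K) (f : H →ₗ[K] H) (hεf : ∀ a : H, εl (f a) = εl a)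
    (x : T2 K H) : eR K H εl (tau2 K H f x) = f (eL K H εl x) := by
  induction x using TensorProduct.induction_on with
  | zero => simp
  | tmul a b => simp [hεf]
  | add u v hu hv => simp only [map_add, hu, hv]

@[simp] lemma mul2_tmul (a b : H) : mul2 K H (a ⊗ₜ[K] b) = a * b := rfl

end Aux

end QHA

namespace QHA

/-- the second Drinfeld twist `F₀ = (S⁻¹⊗S⁻¹)F_δᵀ` is a twist
conjugating `Δ` to `Δ₀(a) = (S⁻¹⊗S⁻¹)Δᵀ(S(a))`, and it twists `Φ` into
`Φ₀ = (S⁻¹⊗S⁻¹⊗S⁻¹)Φ₃₂₁`. -/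
theorem stmt10 {K : Type*} [Field K] {H : Type*} [Ring H] [Algebra K H]
    (qb : QuasiBialgebra K H) (S Sinv : H →ₗ[K] H) (α β : H)
    (h : IsQuasiAntipode K H qb S α β)
    (hS1 : ∀ a : H, Sinv (S a) = a) (hS2 : ∀ a : H, S (Sinv a) = a)
    (Fδ : (T2 K H)ˣ) (hFδtw : IsTwist K H qb Fδ)
    (hconj : ∀ a : H, (Fδ : T2 K H) * qb.Δ a * ((Fδ⁻¹ : (T2 K H)ˣ) : T2 K H) =
      TensorProduct.map S S ((TensorProduct.comm K H H) (qb.Δ (Sinv a))))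
    (hphi : TensorProduct.map S (TensorProduct.map S S) (p321 K H (qb.Φ : T3 K H)) =
      twistPhiE K H qb.Δ.toLinearMap (qb.Φ : T3 K H) Fδ) :
    ∃ F0 : (T2 K H)ˣ,
      (F0 : T2 K H) =
        TensorProduct.map Sinv Sinv ((TensorProduct.comm K H H) (Fδ : T2 K H)) ∧
      IsTwist K H qb F0 ∧
      (∀ a : H, (F0 : T2 K H) * qb.Δ a * ((F0⁻¹ : (T2 K H)ˣ) : T2 K H) =
        TensorProduct.map Sinv Sinv ((TensorProduct.comm K H H) (qb.Δ (S a)))) ∧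
      TensorProduct.map Sinv (TensorProduct.map Sinv Sinv) (p321 K H (qb.Φ : T3 K H)) =
        twistPhiE K H qb.Δ.toLinearMap (qb.Φ : T3 K H) F0 := by
  classical
  -- step 1 : ε ∘ S = ε
  have hpair : ∀ (x : T2 K H) (c d : H),
      qb.ε (mul2 K H (x * (c ⊗ₜ[K] d))) = qb.ε (mul2 K H x) * (qb.ε c * qb.ε d) := by
    intro x c d
    induction x using TensorProduct.induction_on with
    | zero => simp
    | tmul a b =>
      simp only [Algebra.TensorProduct.tmul_mul_tmul, mul2_tmul, map_mul]
      ring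
    | add u v hu hv => simp only [add_mul, map_add, hu, hv]
  have hSmap : ∀ x : T2 K H,
      qb.ε (mul2 K H (TensorProduct.map S LinearMap.id x)) =
        qb.ε (S (eR K H qb.ε.toLinearMap x)) := by
    intro x
    induction x using TensorProduct.induction_on with
    | zero => simp
    | tmul a b =>
      simp only [TensorProduct.map_tmul, LinearMap.id_coe, id_eq, mul2_tmul, eR_tmul,
        AlgHom.toLinearMap_apply, map_mul, map_smul, smul_eq_mul]
      ring
    | add u v hu hv => simp only [map_add, hu, hv]
  have heps_a : ∀ a : H, qb.ε (S a) * qb.ε α = qb.ε a * qb.ε α := by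
    intro a
    have h1 := congrArg qb.ε (h.antialpha a)
    rw [hpair, hSmap, qb.counit_right] at h1
    simp only [map_one, mul_one, map_smul, smul_eq_mul] at h1
    exact h1
  have hmix : ∀ t : T3 K H,
      qb.ε (mixPhi K H S S α β t) = qb.ε α * qb.ε β * qb.ε (mixPhi K H S S 1 1 t) := by
    intro t
    induction t using TensorProduct.induction_on with
    | zero => simp
    | tmul a m =>
      induction m using TensorProduct.induction_on with
      | zero => simp [mixPhi]
      | tmul b c =>
        simp only [mixPhi, LinearMap.coe_comp, Function.comp_apply, TensorProduct.map_tmul,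
          LinearMap.mulLeft_apply, mul2_tmul, map_mul, one_mul]
        ring
      | add u v hu hv =>
        simp only [TensorProduct.tmul_add, map_add, hu, hv]
        ring
    | add u v hu hv =>
      simp only [map_add, hu, hv]
      ring
  have hαβ : qb.ε α * qb.ε β * qb.ε (mixPhi K H S S 1 1 (qb.Φ : T3 K H)) = 1 := by
    rw [← hmix, h.phi, map_one]
  have hα0 : qb.ε α ≠ 0 := by
    intro h0
    rw [h0] at hαβ
    simp at hαβ
  have hεS : ∀ a : H, qb.ε (S a) = qb.ε a := fun a => mul_right_cancel₀ hα0 (heps_a a)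
  have hεSinv : ∀ a : H, qb.ε (Sinv a) = qb.ε a := by
    intro a
    have h' := hεS (Sinv a)
    rw [hS2] at h'
    exact h'.symm
  -- step 2 : basic properties of Sinv
  have hSinv1 : Sinv (1 : H) = 1 := by
    conv_lhs => rw [← h.map_one]
    exact hS1 1
  have hSinvm : ∀ a b : H, Sinv (a * b) = Sinv b * Sinv a := by
    intro a b
    have hab : a * b = S (Sinv b * Sinv a) := by rw [h.anti_mul, hS2, hS2]
    rw [hab, hS1]
  -- step 3 : the unit F0
  have hvalinv : tau2 K H Sinv (Fδ : T2 K H) * tau2 K H Sinv ((Fδ⁻¹ : (T2 K H)ˣ) : T2 K H)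
      = 1 := by
    rw [← tau2_mul K H Sinv hSinvm, Units.inv_mul, tau2_one K H Sinv hSinv1]
  have hinvval : tau2 K H Sinv ((Fδ⁻¹ : (T2 K H)ˣ) : T2 K H) * tau2 K H Sinv (Fδ : T2 K H)
      = 1 := by
    rw [← tau2_mul K H Sinv hSinvm, Units.mul_inv, tau2_one K H Sinv hSinv1]
  set F0 : (T2 K H)ˣ := ⟨tau2 K H Sinv (Fδ : T2 K H),
    tau2 K H Sinv ((Fδ⁻¹ : (T2 K H)ˣ) : T2 K H), hvalinv, hinvval⟩ with hF0def
  have hF0v : (F0 : T2 K H) = tau2 K H Sinv (Fδ : T2 K H) := rfl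
  have hF0iv : ((F0⁻¹ : (T2 K H)ˣ) : T2 K H) =
      tau2 K H Sinv ((Fδ⁻¹ : (T2 K H)ˣ) : T2 K H) := rfl
  -- step 4 : conjugation property
  have hc0 : ∀ b : H, tau2 K H Sinv (qb.Δ (S b)) =
      (F0 : T2 K H) * qb.Δ b * ((F0⁻¹ : (T2 K H)ˣ) : T2 K H) := by
    intro b
    have h2 := hconj (S b)
    rw [hS1] at h2
    have h3 : tau2 K H Sinv ((Fδ : T2 K H) * qb.Δ (S b) * ((Fδ⁻¹ : (T2 K H)ˣ) : T2 K H)) =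
        qb.Δ b := by
      rw [h2]
      exact tau2_tau2 K H S Sinv hS1 _
    rw [tau2_mul K H Sinv hSinvm, tau2_mul K H Sinv hSinvm, ← hF0v, ← hF0iv] at h3
    have h4 : (F0 : T2 K H) * (((F0⁻¹ : (T2 K H)ˣ) : T2 K H) *
        (tau2 K H Sinv (qb.Δ (S b)) * (F0 : T2 K H))) * ((F0⁻¹ : (T2 K H)ˣ) : T2 K H) =
        (F0 : T2 K H) * qb.Δ b * ((F0⁻¹ : (T2 K H)ˣ) : T2 K H) := by rw [h3]
    rwa [Units.mul_inv_cancel_left, Units.mul_inv_cancel_right] at h4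
  have hc : ∀ b : H, tau2 K H Sinv (qb.Δ b) =
      (F0 : T2 K H) * qb.Δ (Sinv b) * ((F0⁻¹ : (T2 K H)ˣ) : T2 K H) := by
    intro b
    have h' := hc0 (Sinv b)
    rwa [hS2] at h'
  -- step 5 : twisted coassociator
  have hΦ0 : TensorProduct.map Sinv (TensorProduct.map Sinv Sinv)
        (p321 K H (qb.Φ : T3 K H)) =
      twistPhiE K H qb.Δ.toLinearMap (qb.Φ : T3 K H) F0 := by
    have hlhs : tau3 K H Sinv (TensorProduct.map S (TensorProduct.map S S)
        (p321 K H (qb.Φ : T3 K H))) = (qb.Φ : T3 K H) := tau3_tau3 K H S Sinv hS1 _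
    have hphi' := congrArg (tau3 K H Sinv) hphi
    rw [hlhs] at hphi'
    simp only [twistPhiE] at hphi'
    rw [tau3_mul K H Sinv hSinvm, tau3_mul K H Sinv hSinvm, tau3_mul K H Sinv hSinvm,
      tau3_mul K H Sinv hSinvm] at hphi'
    rw [tau3_j23 K H Sinv hSinv1, tau3_j12 K H Sinv hSinv1,
      DR_conj K H qb.Δ Sinv _ _ hc, DL_conj K H qb.Δ Sinv _ _ hc] at hphi'
    rw [← hF0v, ← hF0iv] at hphi'
    have e1 : j12 K H (F0 : T2 K H) * j12 K H ((F0⁻¹ : (T2 K H)ˣ) : T2 K H) = 1 := by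
      rw [← j12_mul, Units.mul_inv, j12_one]
    have e1' : j12 K H ((F0⁻¹ : (T2 K H)ˣ) : T2 K H) * j12 K H (F0 : T2 K H) = 1 := by
      rw [← j12_mul, Units.inv_mul, j12_one]
    have e2 : DL K H qb.Δ.toLinearMap (F0 : T2 K H) *
        DL K H qb.Δ.toLinearMap ((F0⁻¹ : (T2 K H)ˣ) : T2 K H) = 1 := by
      rw [← DL_mul, Units.mul_inv, DL_one]
    have e2' : DL K H qb.Δ.toLinearMap ((F0⁻¹ : (T2 K H)ˣ) : T2 K H) *
        DL K H qb.Δ.toLinearMap (F0 : T2 K H) = 1 := by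
      rw [← DL_mul, Units.inv_mul, DL_one]
    have e3 : j23 K H (F0 : T2 K H) * j23 K H ((F0⁻¹ : (T2 K H)ˣ) : T2 K H) = 1 := by
      rw [← j23_mul, Units.mul_inv, j23_one]
    have e3' : j23 K H ((F0⁻¹ : (T2 K H)ˣ) : T2 K H) * j23 K H (F0 : T2 K H) = 1 := by
      rw [← j23_mul, Units.inv_mul, j23_one]
    have e4 : DR K H qb.Δ.toLinearMap (F0 : T2 K H) *
        DR K H qb.Δ.toLinearMap ((F0⁻¹ : (T2 K H)ˣ) : T2 K H) = 1 := by
      rw [← DR_mul, Units.mul_inv, DR_one]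
    have e4' : DR K H qb.Δ.toLinearMap ((F0⁻¹ : (T2 K H)ˣ) : T2 K H) *
        DR K H qb.Δ.toLinearMap (F0 : T2 K H) = 1 := by
      rw [← DR_mul, Units.inv_mul, DR_one]
    have cancel : ∀ {a b : T3 K H}, a * b = 1 → ∀ X : T3 K H, a * (b * X) = X := by
      intro a b hab X
      rw [← mul_assoc, hab, one_mul]
    show tau3 K H Sinv (qb.Φ : T3 K H) =
      twistPhiE K H qb.Δ.toLinearMap (qb.Φ : T3 K H) F0
    simp only [twistPhiE]
    set P := tau3 K H Sinv (qb.Φ : T3 K H) with hP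
    rw [hphi']
    simp only [mul_assoc]
    simp only [cancel e1, cancel e1', cancel e2, cancel e2', cancel e3, cancel e3',
      cancel e4, cancel e4', e1, e1', e2, e2', e3, e3', e4, e4', mul_one]
  -- assemble
  refine ⟨F0, rfl, ⟨?_, ?_⟩, fun a => (hc0 a).symm, hΦ0⟩
  · have heq : eL K H qb.ε.toLinearMap ((F0 : T2 K H)) =
        Sinv (eR K H qb.ε.toLinearMap (Fδ : T2 K H)) := by
      rw [hF0v]
      exact eL_tau2 K H qb.ε.toLinearMap Sinv (fun a => hεSinv a) _
    rw [heq, hFδtw.eps_right, hSinv1]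
  · have heq : eR K H qb.ε.toLinearMap ((F0 : T2 K H)) =
        Sinv (eL K H qb.ε.toLinearMap (Fδ : T2 K H)) := by
      rw [hF0v]
      exact eR_tau2 K H qb.ε.toLinearMap Sinv (fun a => hεSinv a) _
    rw [heq, hFδtw.eps_left, hSinv1]


end QHA
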